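/- In any flip sector S containing both type-0 and type-3 particles, there exists a site i such that either (i ∈ R_S(3) and i+1 ∈ R_S(0)) or (i ∈ R_S(0) and i+1 ∈ R_S(3)); i.e., the disjoint regions of confinement R_S(0) and R_S(3) touch at some point. -/

import Mathlib

/-!
Take a configuration of the sector with a `0` at `p` and a `3` at `q > p`, and let `s` be the
first site after `p` not carrying a `2`. A `1` or a `3` at `s` can be moved left through the
block of `2`s to `p + 1`: a `3` then sits next to the `0`, while a `1` is flipped with the `0`,
bringing the `0` closer to the `3`; a `0` at `s` is itself closer to the `3`. Induction on
`q - p` therefore ends with an adjacent `0 3`. When the `3` lies left of the `0`, apply this to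
the value-reversed configuration `v ↦ 3 - v`, which maps flips to flips.
-/

/-- A single flip: the values at two adjacent sites, which differ by exactly 1,
are swapped; all other sites are unchanged. -/
def FlipStep {N k : ℕ} (c c' : Fin N → Fin k) : Prop :=
  ∃ j j' : Fin N, j.val + 1 = j'.val ∧
    ((c j').val = (c j).val + 1 ∨ (c j).val = (c j').val + 1) ∧
    c' j = c j' ∧ c' j' = c j ∧ ∀ i : Fin N, i ≠ j → i ≠ j' → c' i = c i

/-- Two configurations are in the same sector iff they are related by finitely many flips. -/
def SameSector {N k : ℕ} (c c' : Fin N → Fin k) : Prop :=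
  Relation.ReflTransGen FlipStep c c'

/-- The region of confinement of type-`n` particles in the sector of `c`:
all sites that a type-`n` particle can occupy in some configuration of the sector. -/
def RoC {N k : ℕ} (c : Fin N → Fin k) (n : Fin k) : Set (Fin N) :=
  {j | ∃ c', SameSector c c' ∧ c' j = n}

section

variable {N k : ℕ}

lemma flipStep_comp_swap (c : Fin N → Fin k) {j j' : Fin N} (hjj' : j.val + 1 = j'.val)
    (hc : (c j').val = (c j).val + 1 ∨ (c j).val = (c j').val + 1) :
    FlipStep c (c ∘ Equiv.swap j j') :=
  ⟨j, j', hjj', hc, by simp, by simp, fun _ hi hi' => by simp [Equiv.swap_apply_of_ne_of_ne hi hi']⟩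

lemma FlipStep.rev_comp {c c' : Fin N → Fin k} (h : FlipStep c c') :
    FlipStep (Fin.rev ∘ c) (Fin.rev ∘ c') := by
  obtain ⟨j, j', hjj', hc, hj, hj', hrest⟩ := h
  refine ⟨j, j', hjj', ?_, by simp [hj], by simp [hj'], fun i hi hi' => by simp [hrest i hi hi']⟩
  simp only [Function.comp_apply, Fin.val_rev]
  omega

lemma SameSector.rev_comp {c c' : Fin N → Fin k} (h : SameSector c c') :
    SameSector (Fin.rev ∘ c) (Fin.rev ∘ c') :=
  Relation.ReflTransGen.lift (Fin.rev ∘ ·) (fun _ _ => FlipStep.rev_comp) _ _ h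

lemma RoC_rev_comp (c : Fin N → Fin k) (n : Fin k) : RoC (Fin.rev ∘ c) n = RoC c n.rev := by
  ext j
  constructor
  · rintro ⟨c', hc', rfl⟩
    exact ⟨Fin.rev ∘ c', by simpa [Function.comp_def] using hc'.rev_comp, rfl⟩
  · rintro ⟨c', hc', hj⟩
    exact ⟨Fin.rev ∘ c', hc'.rev_comp, by simp [hj]⟩

lemma exists_sameSector_move_left {w : Fin k} {c : Fin N → Fin k} {r s : Fin N} (hrs : r ≤ s)
    (hw : (c s).val = w.val + 1 ∨ w.val = (c s).val + 1) (hblock : ∀ i, r ≤ i → i < s → c i = w) :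
    ∃ c', SameSector c c' ∧ c' r = c s ∧ ∀ i, i < r ∨ s < i → c' i = c i := by
  rcases hrs.eq_or_lt with rfl | hrs
  · exact ⟨c, .refl, rfl, fun _ _ => rfl⟩
  obtain ⟨s', hs's⟩ : ∃ s' : Fin N, s'.val + 1 = s.val := ⟨⟨s.val - 1, by omega⟩, by simp; omega⟩
  have hs' : c s' = w := hblock s' (by omega) (by omega)
  have swap_apply {i : Fin N} (h : i < s' ∨ s < i) : Equiv.swap s' s i = i :=
    Equiv.swap_apply_of_ne_of_ne (by omega) (by omega)
  obtain ⟨c', hc', hcr, hrest⟩ := exists_sameSector_move_left (c := c ∘ Equiv.swap s' s)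
    (r := r) (s := s') (by omega) (by simpa using hw) fun i hri his' => by
      simpa [swap_apply (.inl his')] using hblock i hri (by omega)
  refine ⟨c', .head (flipStep_comp_swap c hs's (by rw [hs']; omega)) hc', by simpa using hcr,
    fun i hi => ?_⟩
  rw [hrest i (hi.imp_right fun h => by omega)]
  simp [swap_apply (hi.imp_left fun h => by omega)]
termination_by s.val - r.val

lemma exists_first_ne_after {α : Type*} (f : Fin N → α) (a : α) {p q : Fin N}
    (hpq : p < q) (hq : f q ≠ a) :
    ∃ s, p < s ∧ s ≤ q ∧ f s ≠ a ∧ ∀ i, p < i → i < s → f i = a := by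
  obtain ⟨s, ⟨hps, hs⟩, hmin⟩ :=
    wellFounded_lt.has_min {s | p < s ∧ f s ≠ a} ⟨q, hpq, hq⟩
  exact ⟨s, hps, not_lt.1 fun hqs => hmin q ⟨hpq, hq⟩ hqs, hs,
    fun i hpi his => by_contra fun hi => hmin i ⟨hpi, hi⟩ his⟩

theorem exists_adjacent_zero_three_of_lt {c₀ c : Fin N → Fin 4} (hc : SameSector c₀ c)
    {p q : Fin N} (hp : c p = 0) (hq : c q = 3) (hpq : p < q) :
    ∃ i i' : Fin N, i.val + 1 = i'.val ∧ i ∈ RoC c₀ 0 ∧ i' ∈ RoC c₀ 3 := by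
  obtain ⟨s, hps, hsq, hs, hblock⟩ := exists_first_ne_after c 2 hpq (by simp [hq])
  obtain ⟨r, hr⟩ : ∃ r : Fin N, r.val = p.val + 1 := ⟨⟨p.val + 1, by omega⟩, rfl⟩
  have move_to_r (hcs : (c s).val = 1 ∨ (c s).val = 3) :
      ∃ c', SameSector c c' ∧ c' r = c s ∧ c' p = 0 ∧ (s < q → c' q = 3) := by
    obtain ⟨c', hc', hcr, hrest⟩ := exists_sameSector_move_left (w := 2) (r := r) (s := s)
      (by omega) (by omega) fun i hri his => hblock i (by omega) his
    exact ⟨c', hc', hcr, by rw [hrest p (by omega)]; exact hp,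
      fun hsq => by rw [hrest q (by omega)]; exact hq⟩
  have hvals : c s = 0 ∨ c s = 1 ∨ c s = 3 := by omega
  rcases hvals with hs0 | hs1 | hs3
  · have hsq : s < q := lt_of_le_of_ne hsq (by rintro rfl; simp [hq] at hs0)
    exact exists_adjacent_zero_three_of_lt hc hs0 hq hsq
  · have hsq : s < q := lt_of_le_of_ne hsq (by rintro rfl; simp [hq] at hs1)
    obtain ⟨c', hc', hcr, hp', hq'⟩ := move_to_r (by simp [hs1])
    have hflip := flipStep_comp_swap c' (j := p) (j' := r) hr.symm (by simp [hcr, hs1, hp'])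
    have hq'' : (c' ∘ Equiv.swap p r) q = 3 := by
      simp [Equiv.swap_apply_of_ne_of_ne (show q ≠ p by omega) (show q ≠ r by omega), hq' hsq]
    exact exists_adjacent_zero_three_of_lt ((hc.trans hc').tail hflip) (p := r)
      (by simpa using hp') hq'' (by omega)
  · obtain ⟨c', hc', hcr, hp', -⟩ := move_to_r (by simp [hs3])
    exact ⟨p, r, hr.symm, ⟨c', hc.trans hc', hp'⟩, ⟨c', hc.trans hc', hcr.trans hs3⟩⟩
termination_by q.val - p.val
decreasing_by all_goals omega

end

theorem RoC_zero_touches_RoC_three {N : ℕ} (c : Fin N → Fin 4)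
    (h0 : ∃ j, c j = 0) (h3 : ∃ j, c j = 3) :
    ∃ (i i' : Fin N), i.val + 1 = i'.val ∧
      ((i ∈ RoC c 3 ∧ i' ∈ RoC c 0) ∨ (i ∈ RoC c 0 ∧ i' ∈ RoC c 3)) := by
  obtain ⟨p, hp⟩ := h0
  obtain ⟨q, hq⟩ := h3
  rcases lt_or_gt_of_ne (show p ≠ q by rintro rfl; simp [hp] at hq) with hpq | hqp
  · obtain ⟨i, i', hii', hi, hi'⟩ := exists_adjacent_zero_three_of_lt .refl hp hq hpq
    exact ⟨i, i', hii', .inr ⟨hi, hi'⟩⟩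
  · obtain ⟨i, i', hii', hi, hi'⟩ := exists_adjacent_zero_three_of_lt (c₀ := Fin.rev ∘ c) .refl
      (by simp [hq]) (by simp [hp]) hqp
    rw [RoC_rev_comp] at hi hi'
    exact ⟨i, i', hii', .inl ⟨hi, hi'⟩⟩
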